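/- Let p be an odd prime, F_p ⊆ F_s ⊆ F_t ⊆ F_{t²} finite fields, N ≥ 1, and f a quadratic hermitian form of rank 2ρ on F_t^{2N} (1 ≤ ρ ≤ N), with bilinear form B and endomorphism T satisfying B(x,y) = T(x)·y. Let v ∈ Im T and u ∈ F_t^{2N} with v = T(u). Then Σ_{a ∈ F_s^*} S(af, v) = (−1)^ρ t^{2N−ρ} A(s,v), where A(s,v) = s − 1 if Tr_{F_t/F_s}(f(u)) = 0 and A(s,v) = −1 otherwise. (The value of Tr_{F_t/F_s}(f(u)) does not depend on the choice of u with T(u) = v.) -/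

import Mathlib

/-- `H` is a sesquilinear hermitian form on `F_{t²}^N` (conjugation is `x ↦ x^t`). -/
def IsSesquiHermitian {K : Type} [Field K] {N : ℕ} (t : ℕ)
    (H : (Fin N → K) → (Fin N → K) → K) : Prop :=
  (∀ x x' y, H (x + x') y = H x y + H x' y) ∧
  (∀ x y y', H x (y + y') = H x y + H x y') ∧
  (∀ (c : K) (x y : Fin N → K), H (c • x) y = c ^ t * H x y) ∧
  (∀ (c : K) (x y : Fin N → K), H x (c • y) = c * H x y) ∧
  (∀ x y, H x y = H y x ^ t)

/-- The `F_t`-isomorphism `ι : F_t^{2N} → F_{t²}^N`,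
`ι(x₁,…,x₂ₙ) = (x₁ + α x₂, …, x₂ₙ₋₁ + α x₂ₙ)`. -/
def iota (N : ℕ) (F K : Type) [Field F] [Field K] [Algebra F K] (α : K)
    (x : Fin (2 * N) → F) : Fin N → K :=
  fun i => algebraMap F K (x ⟨2 * i.1, by have := i.isLt; omega⟩) +
    algebraMap F K (x ⟨2 * i.1 + 1, by have := i.isLt; omega⟩) * α

/-!
Transported along `ι`, `f` becomes the diagonal `z ↦ H(z, z)` of a hermitian form on `F_{t²}^N`.
Splitting off an anisotropic vector `z₀` gives
`H(c z₀ + w, c z₀ + w) = N(c) H(z₀, z₀) + H(w, w)` for `w ⊥ z₀`, where `N(c) = c^{t+1}` is the norm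
to `F_t`. The norm is onto with all fibres over `F_t^*` of size `t + 1`, so each split contributes
`∑_c ψ(e N(c)) = 1 - (t + 1) = -t`; after `ρ` splits what is left is the radical, and
`∑_x ψ(b f(x)) = (-t)^ρ t^{2(N-ρ)}` for every `b ≠ 0`. Completing the square with
`x ↦ x + b⁻¹ u` (where `B(u, x) = v · x`) gives `S(b f, v) = ψ(-b⁻¹ f(u)) ∑_x ψ(b f(x))`, and as `a`
runs over `F_s^*` so does `-a⁻¹`, while `ψ(a f(u)) = ψ_s(a Tr_{F_t/F_s}(f(u)))`.
-/

open Finset AddChar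

theorem sum_eq_add_sum_units {G₀ R : Type*} [GroupWithZero G₀] [Fintype G₀] [DecidableEq G₀]
    [AddCommMonoid R] (g : G₀ → R) : ∑ x, g x = g 0 + ∑ u : G₀ˣ, g u := by
  rw [← add_sum_erase _ _ (mem_univ 0)]
  congr 1
  exact sum_bij' (fun x hx => Units.mk0 x (ne_of_mem_erase hx)) (fun u _ => u) (by simp)
    (by simp) (by simp) (by simp) (by simp)

theorem AddChar.sum_units_mulShift {F : Type*} [Field F] [Fintype F] [DecidableEq F]
    {ψ : AddChar F ℂ} (hψ : ψ.IsPrimitive) (c : F) :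
    ∑ a : Fˣ, ψ (a * c) = if c = 0 then (Fintype.card F : ℂ) - 1 else -1 := by
  have h := sum_mulShift c hψ
  rw [sum_eq_add_sum_units, zero_mul, map_zero_eq_one] at h
  split_ifs at h ⊢ <;> linear_combination h

theorem AddChar.IsPrimitive.mulShift {R : Type*} [CommRing R] [NoZeroDivisors R]
    {ψ : AddChar R ℂ} (hψ : ψ.IsPrimitive) {b : R} (hb : b ≠ 0) : (ψ.mulShift b).IsPrimitive :=
  fun a ha => by rw [mulShift_mulShift]; exact hψ (mul_ne_zero hb ha)

noncomputable def traceChar (p : ℕ) [Fact p.Prime] (F : Type*) [Field F] [Algebra (ZMod p) F] :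
    AddChar F ℂ :=
  ZMod.stdAddChar.compAddMonoidHom (Algebra.trace (ZMod p) F).toAddMonoidHom

section traceChar

variable (p : ℕ) [Fact p.Prime] {F : Type*} [Field F] [Algebra (ZMod p) F]

theorem traceChar_apply (z : F) :
    traceChar p F z =
      Complex.exp (2 * Real.pi * Complex.I * ((Algebra.trace (ZMod p) F z).val : ℂ) / p) := by
  have h := ZMod.stdAddChar_coe (N := p) ((Algebra.trace (ZMod p) F z).val : ℤ)
  simp only [Int.cast_natCast, ZMod.natCast_zmod_val] at h
  rw [traceChar, coe_compAddMonoidHom, Function.comp_apply]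
  exact_mod_cast h

theorem isPrimitive_traceChar [Finite F] : (traceChar p F).IsPrimitive := by
  refine IsPrimitive.of_ne_one fun h => ?_
  obtain ⟨z, hz⟩ := Algebra.trace_surjective (ZMod p) F 1
  have h1 : ZMod.stdAddChar (1 : ZMod p) = ZMod.stdAddChar (0 : ZMod p) := by
    rw [show ZMod.stdAddChar (0 : ZMod p) = 1 from map_zero_eq_one _, ← hz]
    exact DFunLike.congr_fun h z
  exact one_ne_zero (ZMod.injective_stdAddChar h1)

theorem traceChar_algebraMap_mul [Finite F] {E : Type*} [Field E] [Finite E] [Algebra (ZMod p) E]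
    [Algebra F E] [IsScalarTower (ZMod p) F E] (a : F) (z : E) :
    traceChar p E (algebraMap F E a * z) = traceChar p F (a * Algebra.trace F E z) := by
  simp only [traceChar, compAddMonoidHom_apply, LinearMap.toAddMonoidHom_coe]
  rw [← Algebra.trace_trace (S := F), ← Algebra.smul_def, map_smul, smul_eq_mul]

end traceChar

theorem sum_units_traceChar_neg_inv_mul (p : ℕ) [Fact p.Prime] {F E : Type*} [Field F]
    [Fintype F] [DecidableEq F] [Field E] [Finite E] [Algebra (ZMod p) F] [Algebra (ZMod p) E]
    [Algebra F E] [IsScalarTower (ZMod p) F E] (z : E) :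
    ∑ a : Fˣ, traceChar p E (-(algebraMap F E a)⁻¹ * z) =
      if Algebra.trace F E z = 0 then (Fintype.card F : ℂ) - 1 else -1 := by
  have hinv : Function.Bijective fun a : Fˣ => -a⁻¹ :=
    Function.Involutive.bijective fun a => by simp
  rw [← sum_units_mulShift (isPrimitive_traceChar p), ← Fintype.sum_bijective _ hinv _ _
    fun _ => rfl]
  simp only [Units.val_neg, Units.val_inv_eq_inv_val, map_neg, map_inv₀, inv_neg, inv_inv,
    neg_neg, traceChar_algebraMap_mul]

theorem AddChar.sum_complete_square {F V : Type*} [Field F] [AddCommGroup V] [Module F V]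
    [Fintype V] (ψ : AddChar F ℂ) {f ℓ : V → F} {u : V}
    (hf : ∀ x (c : F), f (x + c • u) = f x + c ^ 2 * f u + c * ℓ x) {b : F} (hb : b ≠ 0) :
    ∑ x, ψ (b * f x + ℓ x) = ψ (-b⁻¹ * f u) * ∑ x, ψ (b * f x) := by
  have h : ∀ x, b * f x + ℓ x = b * f (x + b⁻¹ • u) + -b⁻¹ * f u := fun x => by
    rw [hf]
    field_simp
    ring
  simp only [h, AddChar.map_add_eq_mul, ← sum_mul, mul_comm (ψ (-b⁻¹ * f u))]
  congr 1
  exact Equiv.sum_comp (Equiv.addRight (b⁻¹ • u)) fun x => ψ (b * f x)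

theorem FiniteField.exists_pow_ne_self {K : Type*} [Field K] [Fintype K] {q : ℕ} (hq : 1 < q)
    (hqK : q < Fintype.card K) : ∃ c : K, c ^ q ≠ c := by
  by_contra! h
  refine FiniteField.X_pow_card_sub_X_ne_zero K hq
    (Polynomial.eq_zero_of_natDegree_lt_card_of_eval_eq_zero _ Function.injective_id
      (fun c => by simp [h c]) ?_)
  rwa [FiniteField.X_pow_card_sub_X_natDegree_eq K hq]

theorem MonoidHom.sum_comp_of_surjective {G M R : Type*} [Group G] [Group M] [Fintype G]
    [Fintype M] [DecidableEq M] [AddCommMonoid R] {φ : G →* M} (hφ : Function.Surjective φ)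
    (g : M → R) : ∑ x, g (φ x) = #{x | φ x = 1} • ∑ y, g y := by
  rw [Finset.sum_comp, image_univ_of_surjective hφ, smul_sum]
  refine sum_congr rfl fun y _ => ?_
  rw [MonoidHom.card_fiber_eq_of_mem_range φ (hφ y) ⟨1, map_one φ⟩]

section FiniteField

variable {F K : Type*} [Field F] [Fintype F] [Field K] [Fintype K] [Algebra F K]

theorem algebraMap_norm_eq_pow_card_add_one (hK : Fintype.card K = Fintype.card F ^ 2)
    (c : K) : algebraMap F K (Algebra.norm F c) = c ^ (Fintype.card F + 1) := by
  have hq : 1 < Fintype.card F := Fintype.one_lt_card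
  have h : (Fintype.card F ^ 2 - 1) / (Fintype.card F - 1) = Fintype.card F + 1 :=
    Nat.div_eq_of_eq_mul_left (by omega) (by
      zify [(by omega : 1 ≤ Fintype.card F), Nat.one_le_pow 2 (Fintype.card F) (by omega)]
      ring)
  rw [FiniteField.algebraMap_norm_eq_pow, Nat.card_eq_fintype_card, Nat.card_eq_fintype_card, hK,
    h]

theorem sum_addChar_mul_norm (hK : Fintype.card K = Fintype.card F ^ 2) {ψ : AddChar F ℂ}
    (hψ : ψ.IsPrimitive) {e : F} (he : e ≠ 0) :
    ∑ c : K, ψ (e * Algebra.norm F c) = -(Fintype.card F : ℂ) := by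
  classical
  set q := Fintype.card F
  let φ : Kˣ →* Fˣ := Units.map (Algebra.norm F)
  have hφ : Function.Surjective φ := FiniteField.unitsMap_norm_surjective F K
  set m := #{u | φ u = 1}
  have hq : 2 ≤ q := Fintype.one_lt_card
  -- `φ` is onto with fibres of size `m`, so `q² - 1 = m (q - 1)`
  have hm : m = q + 1 := by
    have h := φ.sum_comp_of_surjective hφ (fun _ => 1)
    simp only [sum_const, card_univ, smul_eq_mul, mul_one, Fintype.card_units, hK] at h
    refine Nat.eq_of_mul_eq_mul_right (by omega : 0 < q - 1) ?_
    rw [← h]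
    zify [(by omega : 1 ≤ q), Nat.one_le_pow 2 q (by omega)]
    ring
  calc ∑ c : K, ψ (e * Algebra.norm F c)
      = 1 + ∑ u : Kˣ, ψ ((φ u : F) * e) := by
        rw [sum_eq_add_sum_units, Algebra.norm_zero, mul_zero, map_zero_eq_one]
        simp only [φ, Units.coe_map, mul_comm e]
    _ = 1 + m • ∑ y : Fˣ, ψ (y * e) := by
        rw [φ.sum_comp_of_surjective hφ (fun y : Fˣ => ψ (y * e))]
    _ = -q := by
        rw [sum_units_mulShift hψ, if_neg he, hm, nsmul_eq_mul]
        push_cast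
        ring

theorem notMem_range_algebraMap_of_adjoin_eq_top (hK : Fintype.card F < Fintype.card K) {α : K}
    (hα : Algebra.adjoin F {α} = ⊤) : α ∉ Set.range (algebraMap F K) := by
  rintro ⟨c, rfl⟩
  have hbot : Algebra.adjoin F {algebraMap F K c} = ⊥ := le_bot_iff.mp
    (Algebra.adjoin_le (Set.singleton_subset_iff.mpr (Subalgebra.algebraMap_mem ⊥ c)))
  have := Fintype.card_le_of_surjective _ (Algebra.surjective_algebraMap_iff.mpr (hα ▸ hbot))
  omega

end FiniteField

structure IsHermitianForm {K V : Type*} [Field K] [AddCommGroup V] [Module K V] (t : ℕ)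
    (H : V → V → K) : Prop where
  add_left : ∀ x x' y, H (x + x') y = H x y + H x' y
  add_right : ∀ x y y', H x (y + y') = H x y + H x y'
  smul_left : ∀ (c : K) x y, H (c • x) y = c ^ t * H x y
  smul_right : ∀ (c : K) x y, H x (c • y) = c * H x y
  conj_symm : ∀ x y, H x y = H y x ^ t

theorem IsSesquiHermitian.isHermitianForm {K : Type} [Field K] {N t : ℕ}
    {H : (Fin N → K) → (Fin N → K) → K} (hH : IsSesquiHermitian t H) : IsHermitianForm t H :=
  ⟨hH.1, hH.2.1, hH.2.2.1, hH.2.2.2.1, hH.2.2.2.2⟩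

def radical {K V : Type*} [Zero K] (H : V → V → K) : Set V := {z | ∀ w, H w z = 0}

def LinearMap.prodKerEquiv {K V : Type*} [Field K] [AddCommGroup V] [Module K V]
    (φ : V →ₗ[K] K) {z : V} (hz : φ z ≠ 0) : K × LinearMap.ker φ ≃ V where
  toFun cw := cw.1 • z + cw.2
  invFun v := (φ v / φ z, ⟨v - (φ v / φ z) • z, by simp [hz]⟩)
  left_inv := fun ⟨c, w⟩ => by
    have hw : φ w = 0 := w.2
    ext <;> simp [hw, hz]
  right_inv v := by simp

theorem LinearMap.natCard_eq_mul_natCard_ker {K V : Type*} [Field K] [AddCommGroup V]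
    [Module K V] (φ : V →ₗ[K] K) {z : V} (hz : φ z ≠ 0) :
    Nat.card V = Nat.card K * Nat.card (LinearMap.ker φ) := by
  rw [← Nat.card_prod, Nat.card_congr (φ.prodKerEquiv hz)]

namespace IsHermitianForm

variable {K V : Type*} [Field K] [AddCommGroup V] [Module K V] {t : ℕ} {H : V → V → K}
  (hH : IsHermitianForm t H)
include hH

def toLin (z : V) : V →ₗ[K] K where
  toFun := H z
  map_add' := hH.add_right z
  map_smul' c := hH.smul_right c z

theorem restrict (W : Submodule K V) : IsHermitianForm t fun x y : W => H x y where
  add_left x x' y := hH.add_left x x' y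
  add_right x y y' := hH.add_right x y y'
  smul_left c x y := hH.smul_left c x y
  smul_right c x y := hH.smul_right c x y
  conj_symm x y := hH.conj_symm x y

theorem apply_eq_zero_symm (ht : t ≠ 0) {x y : V} (h : H x y = 0) : H y x = 0 := by
  rw [hH.conj_symm, h, zero_pow ht]

theorem apply_eq_zero_of_add_swap (hc : ∃ c : K, c ^ t ≠ c) {z : V}
    (h : ∀ w, H z w + H w z = 0) (w : V) : H w z = 0 := by
  obtain ⟨c, hc⟩ := hc
  have h₁ := h (c • w)
  rw [hH.smul_right, hH.smul_left] at h₁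
  have h₂ : (c ^ t - c) * H w z = 0 := by linear_combination h₁ - c * h w
  exact (mul_eq_zero.mp h₂).resolve_left (sub_ne_zero.mpr hc)

theorem mem_radical_iff_add_swap (hc : ∃ c : K, c ^ t ≠ c) (ht : t ≠ 0) {z : V} :
    z ∈ radical H ↔ ∀ w, H z w + H w z = 0 :=
  ⟨fun h w => by rw [h w, hH.apply_eq_zero_symm ht (h w), add_zero],
    hH.apply_eq_zero_of_add_swap hc⟩

theorem exists_apply_self_ne_zero (hc : ∃ c : K, c ^ t ≠ c) (h : radical H ≠ Set.univ) :
    ∃ z, H z z ≠ 0 := by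
  by_contra! h₀
  refine h (Set.eq_univ_of_forall fun z w => hH.apply_eq_zero_of_add_swap hc (fun w => ?_) w)
  have := h₀ (z + w)
  rw [hH.add_left, hH.add_right, hH.add_right, h₀ z, h₀ w] at this
  linear_combination this

theorem apply_smul_add_self (ht : t ≠ 0) (c : K) {z w : V} (hzw : H z w = 0) :
    H (c • z + w) (c • z + w) = c ^ (t + 1) * H z z + H w w := by
  rw [hH.add_left, hH.add_right, hH.add_right, hH.smul_left, hH.smul_left, hH.smul_right,
    hH.smul_right, hzw, hH.apply_eq_zero_symm ht hzw]
  ring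

theorem card_radical_restrict {z : V} (hz : H z z ≠ 0) :
    Nat.card (radical fun x y : LinearMap.ker (hH.toLin z) => H x y) = Nat.card (radical H) :=
  Nat.card_congr
    { toFun x := ⟨x.1, fun v => by
        obtain ⟨⟨c, w⟩, rfl⟩ := ((hH.toLin z).prodKerEquiv hz).surjective v
        have hzx : H z x.1 = 0 := x.1.2
        simp only [LinearMap.prodKerEquiv, Equiv.coe_fn_mk, hH.add_left, hH.smul_left, hzx,
          mul_zero, zero_add]
        exact x.2 w⟩
      invFun x := ⟨⟨x.1, x.2 z⟩, fun w => x.2 w⟩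
      left_inv _ := rfl
      right_inv _ := rfl }

end IsHermitianForm

section FiniteField

variable {F K : Type*} [Field F] [Fintype F] [Field K] [Fintype K] [Algebra F K]

theorem IsHermitianForm.sum_addChar_split (hK : Fintype.card K = Fintype.card F ^ 2)
    {ψ : AddChar F ℂ} (hψ : ψ.IsPrimitive) {V : Type*} [AddCommGroup V] [Module K V] [Fintype V]
    {H : V → V → K} (hH : IsHermitianForm (Fintype.card F) H) {Q : V → F}
    (hQ : ∀ z, algebraMap F K (Q z) = H z z) {z₀ : V} (hz₀ : H z₀ z₀ ≠ 0)
    [Fintype (LinearMap.ker (hH.toLin z₀))] :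
    ∑ z, ψ (Q z) = -(Fintype.card F : ℂ) * ∑ w : LinearMap.ker (hH.toLin z₀), ψ (Q w) := by
  have hq : 1 < Fintype.card F := Fintype.one_lt_card
  let E := (hH.toLin z₀).prodKerEquiv hz₀
  have hQz₀ : Q z₀ ≠ 0 := fun h => hz₀ (by rw [← hQ, h, map_zero])
  have hQE : ∀ c w, Q (E (c, w)) = Q z₀ * Algebra.norm F c + Q w := fun c w =>
    (algebraMap F K).injective (by
      rw [hQ, map_add, map_mul, hQ, hQ, algebraMap_norm_eq_pow_card_add_one hK]
      exact (hH.apply_smul_add_self (by omega) c w.2).trans (by ring))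
  calc ∑ z, ψ (Q z) = ∑ cw, ψ (Q (E cw)) := (E.sum_comp _).symm
    _ = (∑ c : K, ψ (Q z₀ * Algebra.norm F c)) * ∑ w : LinearMap.ker (hH.toLin z₀), ψ (Q w) := by
      simp only [Fintype.sum_prod_type, hQE, AddChar.map_add_eq_mul, sum_mul_sum]
    _ = _ := by rw [sum_addChar_mul_norm hK hψ hQz₀]

theorem IsHermitianForm.sum_addChar_eq (hK : Fintype.card K = Fintype.card F ^ 2) {ψ : AddChar F ℂ}
    (hψ : ψ.IsPrimitive) (ρ : ℕ) {V : Type*} [AddCommGroup V] [Module K V] [Fintype V]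
    {H : V → V → K} (hH : IsHermitianForm (Fintype.card F) H) {Q : V → F}
    (hQ : ∀ z, algebraMap F K (Q z) = H z z)
    (hV : Nat.card V = Fintype.card F ^ (2 * ρ) * Nat.card (radical H)) :
    ∑ z, ψ (Q z) = (-(Fintype.card F : ℂ)) ^ ρ * Nat.card (radical H) := by
  classical
  set q := Fintype.card F
  have hq : 1 < q := Fintype.one_lt_card
  have hc := FiniteField.exists_pow_ne_self (K := K) hq (by rw [hK]; nlinarith)
  induction ρ generalizing V with
  | zero =>
    have hrad : radical H = Set.univ :=
      Set.eq_of_subset_of_ncard_le (Set.subset_univ _)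
        (by rw [Set.ncard_univ, ← Nat.card_coe_set_eq]; simpa using hV.le) (Set.toFinite _)
    have hQ0 : ∀ z, Q z = 0 := fun z =>
      (algebraMap F K).injective (by rw [hQ, map_zero]; exact Set.eq_univ_iff_forall.mp hrad z z)
    simp [hQ0, hrad, Nat.card_eq_fintype_card]
  | succ ρ ih =>
    obtain ⟨z₀, hz₀⟩ := hH.exists_apply_self_ne_zero hc fun hrad => by
      rw [hrad, Nat.card_coe_set_eq, Set.ncard_univ] at hV
      have h1 : 1 < q ^ (2 * (ρ + 1)) := Nat.one_lt_pow (by omega) hq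
      have h2 : 0 < Nat.card V := Nat.card_pos
      nlinarith
    set W := LinearMap.ker (hH.toLin z₀)
    have hW : Nat.card W = q ^ (2 * ρ) * Nat.card (radical fun x y : W => H x y) := by
      rw [(hH.toLin z₀).natCard_eq_mul_natCard_ker hz₀, Nat.card_eq_fintype_card (α := K), hK]
        at hV
      rw [hH.card_radical_restrict hz₀]
      refine Nat.eq_of_mul_eq_mul_left (by positivity : 0 < q ^ 2) ?_
      rw [hV]
      ring
    rw [hH.sum_addChar_split hK hψ hQ hz₀, ih (V := W) (fun w => hQ w) (hH.restrict W) hW,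
      hH.card_radical_restrict hz₀]
    ring

end FiniteField

section iota

variable {F K : Type} [Field F] [Field K] [Algebra F K] {N : ℕ} {α : K}

theorem iota_add (x y : Fin (2 * N) → F) :
    iota N F K α (x + y) = iota N F K α x + iota N F K α y := by
  funext i
  simp only [iota, Pi.add_apply, map_add]
  ring

theorem iota_smul (c : F) (x : Fin (2 * N) → F) :
    iota N F K α (c • x) = algebraMap F K c • iota N F K α x := by
  funext i
  simp only [iota, Pi.smul_apply, smul_eq_mul, map_mul]
  ring

theorem eq_and_eq_of_add_mul_eq (hα : α ∉ Set.range (algebraMap F K)) {a b a' b' : F}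
    (h : algebraMap F K a + algebraMap F K b * α = algebraMap F K a' + algebraMap F K b' * α) :
    a = a' ∧ b = b' := by
  obtain rfl : b = b' := by
    by_contra hb
    refine hα ⟨(a' - a) / (b - b'), ?_⟩
    rw [map_div₀, map_sub, map_sub, div_eq_iff (by simpa [sub_eq_zero] using hb)]
    linear_combination -h
  exact ⟨(algebraMap F K).injective (by simpa using h), rfl⟩

theorem iota_injective (hα : α ∉ Set.range (algebraMap F K)) :
    Function.Injective (iota N F K α) := by
  intro x y h
  funext j
  have hj := j.isLt
  have hi := eq_and_eq_of_add_mul_eq hα (congrFun h ⟨j / 2, by omega⟩)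
  rcases Nat.mod_two_eq_zero_or_one j with h2 | h2
  · convert hi.1 using 2 <;> ext <;> simp only <;> omega
  · convert hi.2 using 2 <;> ext <;> simp only <;> omega

theorem iota_bijective [Fintype F] [Fintype K] (hα : α ∉ Set.range (algebraMap F K))
    (hK : Fintype.card K = Fintype.card F ^ 2) : Function.Bijective (iota N F K α) := by
  rw [Fintype.bijective_iff_injective_and_card]
  refine ⟨iota_injective hα, ?_⟩
  simp only [Fintype.card_fun, Fintype.card_fin, hK, pow_mul]

end iota

namespace QuadraticHermitian

variable {F K : Type} [Field F] [Fintype F] [Field K] [Algebra F K] {N : ℕ} {α : K}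
  {H : (Fin N → K) → (Fin N → K) → K} {f : (Fin (2 * N) → F) → F}
  {T : (Fin (2 * N) → F) →ₗ[F] (Fin (2 * N) → F)} (hH : IsHermitianForm (Fintype.card F) H)
  (hf : ∀ x, algebraMap F K (f x) = H (iota N F K α x) (iota N F K α x))
include hH hf

theorem map_smul_eq_sq_mul (c : F) (x : Fin (2 * N) → F) : f (c • x) = c ^ 2 * f x :=
  (algebraMap F K).injective (by
    rw [hf, iota_smul, hH.smul_left, hH.smul_right, ← map_pow, FiniteField.pow_card, map_mul,
      map_pow, hf]
    ring)

theorem algebraMap_polar (x y : Fin (2 * N) → F) :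
    algebraMap F K (f (x + y) - f x - f y) =
      H (iota N F K α x) (iota N F K α y) + H (iota N F K α y) (iota N F K α x) := by
  rw [map_sub, map_sub, hf, hf, hf, iota_add, hH.add_left, hH.add_right, hH.add_right]
  ring

theorem map_add_smul (hT : ∀ x y, f (x + y) - f x - f y = ∑ i, T x i * y i) (u x : Fin (2 * N) → F)
    (c : F) : f (x + c • u) = f x + c ^ 2 * f u + c * ∑ i, T u i * x i := by
  have h := hT (c • u) x
  rw [map_smul, add_comm, map_smul_eq_sq_mul hH hf] at h
  simp only [Pi.smul_apply, smul_eq_mul, mul_assoc, ← mul_sum] at h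
  linear_combination h

theorem card_polarRadical [Fintype K] (hα : α ∉ Set.range (algebraMap F K))
    (hK : Fintype.card K = Fintype.card F ^ 2) (W : Set (Fin (2 * N) → F))
    (hW : ∀ x, x ∈ W ↔ ∀ y, f (x + y) - f x - f y = 0) :
    Nat.card W = Nat.card (radical H) := by
  have hq : 1 < Fintype.card F := Fintype.one_lt_card
  have hc := FiniteField.exists_pow_ne_self (K := K) hq (by rw [hK]; nlinarith)
  have hι := iota_bijective (N := N) hα hK
  refine Nat.card_congr (Equiv.subtypeEquiv (Equiv.ofBijective _ hι) fun x => ?_)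
  rw [hW, Equiv.ofBijective_apply, hH.mem_radical_iff_add_swap hc (by omega), hι.2.forall]
  simp only [← algebraMap_polar hH hf, map_eq_zero]

theorem sum_addChar_eq [Fintype K] (hα : α ∉ Set.range (algebraMap F K))
    (hK : Fintype.card K = Fintype.card F ^ 2) {ψ : AddChar F ℂ} (hψ : ψ.IsPrimitive) (ρ : ℕ)
    (hrad : Nat.card (Fin N → K) = Fintype.card F ^ (2 * ρ) * Nat.card (radical H)) :
    ∑ x, ψ (f x) = (-(Fintype.card F : ℂ)) ^ ρ * Nat.card (radical H) := by
  let ι := Equiv.ofBijective _ (iota_bijective (N := N) hα hK)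
  rw [← ι.symm.sum_comp]
  exact hH.sum_addChar_eq hK hψ ρ (Q := fun z => f (ι.symm z))
    (fun z => by rw [hf]; exact congrArg₂ H (ι.apply_symm_apply z) (ι.apply_symm_apply z)) hrad

theorem sum_addChar_eq_of_finrank [Fintype K] (hα : α ∉ Set.range (algebraMap F K))
    (hK : Fintype.card K = Fintype.card F ^ 2) {ψ : AddChar F ℂ} (hψ : ψ.IsPrimitive)
    (W : Submodule F (Fin (2 * N) → F)) (hW : ∀ x, x ∈ W ↔ ∀ y, f (x + y) - f x - f y = 0)
    {ρ : ℕ} (hrk : 2 * N - Module.finrank F W = 2 * ρ) :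
    ∑ x, ψ (f x) = (-1) ^ ρ * (Fintype.card F : ℂ) ^ (2 * N - ρ) := by
  classical
  have hWle := W.finrank_le
  rw [Module.finrank_fin_fun] at hWle
  have hWcard : Nat.card W = Nat.card (radical H) := card_polarRadical hH hf hα hK W hW
  have hrad : Nat.card (radical H) = Fintype.card F ^ (2 * (N - ρ)) := by
    rw [← hWcard, Nat.card_eq_fintype_card,
      Module.card_eq_pow_finrank (K := F)]
    congr 1
    omega
  rw [sum_addChar_eq hH hf hα hK hψ ρ (by
      rw [hrad, Nat.card_eq_fintype_card, Fintype.card_fun, Fintype.card_fin, hK, ← pow_mul,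
        ← pow_add]
      congr 1
      omega),
    hrad, Nat.cast_pow, neg_pow, mul_assoc, ← pow_add]
  congr 2
  omega

end QuadraticHermitian

theorem stmt_15_general (p s t N ρ : ℕ) [Fact p.Prime]
    (Fs Ft K : Type) [Field Fs] [Field Ft] [Field K]
    [Fintype Fs] [Fintype Ft] [Fintype K] [DecidableEq Fs]
    [Algebra (ZMod p) Fs] [Algebra (ZMod p) Ft] [Algebra Fs Ft] [Algebra Ft K]
    [IsScalarTower (ZMod p) Fs Ft]
    (hcs : Fintype.card Fs = s) (hct : Fintype.card Ft = t)
    (hcK : Fintype.card K = t ^ 2)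
    (H : (Fin N → K) → (Fin N → K) → K) (hH : IsSesquiHermitian t H)
    (α : K) (hα : Algebra.adjoin Ft ({α} : Set K) = ⊤)
    (f : (Fin (2 * N) → Ft) → Ft)
    (hf : ∀ x, algebraMap Ft K (f x) = H (iota N Ft K α x) (iota N Ft K α x))
    (B : (Fin (2 * N) → Ft) → (Fin (2 * N) → Ft) → Ft)
    (hB : ∀ x y, B x y = f (x + y) - f x - f y)
    (W : Submodule Ft (Fin (2 * N) → Ft)) (hW : ∀ x, x ∈ W ↔ ∀ y, B x y = 0)
    (hrk : 2 * N - Module.finrank Ft W = 2 * ρ)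
    (T : (Fin (2 * N) → Ft) →ₗ[Ft] (Fin (2 * N) → Ft))
    (hT : ∀ x y, B x y = ∑ i, T x i * y i)
    (ψ : Ft → ℂ)
    (hψ : ∀ z, ψ z = Complex.exp
      (2 * Real.pi * Complex.I * ((Algebra.trace (ZMod p) Ft z).val : ℂ) / p))
    (u v : Fin (2 * N) → Ft) (hv : T u = v) :
    ∑ a : Fsˣ, (∑ x : Fin (2 * N) → Ft,
        ψ (algebraMap Fs Ft (a : Fs) * f x + ∑ i, v i * x i)) =
      (-1 : ℂ) ^ ρ * (t : ℂ) ^ (2 * N - ρ) *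
        (if Algebra.trace Fs Ft (f u) = 0 then (s : ℂ) - 1 else -1) := by
  classical
  subst hct hcs
  obtain rfl : ψ = traceChar p Ft := funext fun z => (hψ z).trans (traceChar_apply p z).symm
  have hq : 1 < Fintype.card Ft := Fintype.one_lt_card
  have hH' := hH.isHermitianForm
  have hα' := notMem_range_algebraMap_of_adjoin_eq_top (by rw [hcK]; nlinarith) hα
  have hG : ∀ b : Ft, b ≠ 0 → ∑ x, traceChar p Ft (b * f x) =
      (-1) ^ ρ * (Fintype.card Ft : ℂ) ^ (2 * N - ρ) := fun b hb => by
    simpa using QuadraticHermitian.sum_addChar_eq_of_finrank hH' hf hα' hcK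
      ((isPrimitive_traceChar p).mulShift hb) W (fun x => by simp only [hW, hB]) hrk
  have hsq := QuadraticHermitian.map_add_smul hH' hf (fun x y => by rw [← hB, hT]) u
  rw [hv] at hsq
  calc _ = ∑ a : Fsˣ, traceChar p Ft (-(algebraMap Fs Ft a)⁻¹ * f u) *
        ((-1) ^ ρ * (Fintype.card Ft : ℂ) ^ (2 * N - ρ)) :=
        sum_congr rfl fun a _ => by rw [sum_complete_square _ hsq (by simp), hG _ (by simp)]
    _ = _ := by rw [← sum_mul, sum_units_traceChar_neg_inv_mul, mul_comm]

/-- For a quadratic hermitian form `f` of rank `2ρ` on `F_t^{2N}` and `v = T(u) ∈ Im T`,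
`∑_{a ∈ F_s^*} S(af, v) = (−1)^ρ t^{2N−ρ} A(s,v)`, where `A(s,v) = s − 1` if
`Tr_{F_t/F_s}(f(u)) = 0` and `A(s,v) = −1` otherwise. -/
theorem stmt_15 (p s t N ρ : ℕ) [Fact p.Prime] (hpodd : p ≠ 2)
    (hN : 1 ≤ N) (hρ1 : 1 ≤ ρ) (hρN : ρ ≤ N)
    (Fs Ft K : Type) [Field Fs] [Field Ft] [Field K]
    [Fintype Fs] [Fintype Ft] [Fintype K] [DecidableEq Fs] [DecidableEq Ft]
    [Algebra (ZMod p) Fs] [Algebra (ZMod p) Ft] [Algebra Fs Ft] [Algebra Ft K]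
    [IsScalarTower (ZMod p) Fs Ft]
    (hcs : Fintype.card Fs = s) (hct : Fintype.card Ft = t)
    (hcK : Fintype.card K = t ^ 2)
    (H : (Fin N → K) → (Fin N → K) → K) (hH : IsSesquiHermitian t H)
    (α : K) (hα : Algebra.adjoin Ft ({α} : Set K) = ⊤)
    (f : (Fin (2 * N) → Ft) → Ft)
    (hf : ∀ x, algebraMap Ft K (f x) = H (iota N Ft K α x) (iota N Ft K α x))
    (B : (Fin (2 * N) → Ft) → (Fin (2 * N) → Ft) → Ft)
    (hB : ∀ x y, B x y = f (x + y) - f x - f y)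
    (W : Submodule Ft (Fin (2 * N) → Ft)) (hW : ∀ x, x ∈ W ↔ ∀ y, B x y = 0)
    (hrk : 2 * N - Module.finrank Ft W = 2 * ρ)
    (T : (Fin (2 * N) → Ft) →ₗ[Ft] (Fin (2 * N) → Ft))
    (hT : ∀ x y, B x y = ∑ i, T x i * y i)
    (ψ : Ft → ℂ)
    (hψ : ∀ z, ψ z = Complex.exp
      (2 * Real.pi * Complex.I * ((Algebra.trace (ZMod p) Ft z).val : ℂ) / p))
    (u v : Fin (2 * N) → Ft) (hv : T u = v) :
    ∑ a : Fsˣ, (∑ x : Fin (2 * N) → Ft,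
        ψ (algebraMap Fs Ft (a : Fs) * f x + ∑ i, v i * x i)) =
      (-1 : ℂ) ^ ρ * (t : ℂ) ^ (2 * N - ρ) *
        (if Algebra.trace Fs Ft (f u) = 0 then (s : ℂ) - 1 else -1) :=
  stmt_15_general p s t N ρ Fs Ft K hcs hct hcK H hH α hα f hf B hB W hW hrk T hT ψ hψ u v hv
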